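/- arXiv:1012.2729 — 5 statements merged into one kernel-verified Lean document; each statement's English description precedes it below -/
import Mathlib

section
/- Let n > m > 1 and let σ = (1,2,…,m) and ω = (1,m+1,…,n) be cycles in the symmetric group S_n. Then the alternating group A_n is contained in the commutator subgroup of the subgroup generated by σ and ω. -/
/-!
Points are indexed from `0`, so `σ = (0 1 … m-1)` and `ω = (0 m m+1 … n-1)` on `Fin n`, and
the commutator `⁅σ, ω⁆` is the 3-cycle `(0 1 m) = swap m 1 * swap m 0`.

For a subgroup `N`, the relation `swap x y * swap x z ∈ N` says that `swap x y` and `swap x z`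
lie in the same left coset of `N`, so it is an equivalence relation. If all points `y ≠ x` are
equivalent, `N` contains every 3-cycle, since `swap y z = swap x y * swap x z * swap x y`, hence
`N ≥ Aₙ`. For `N = ⁅G, G⁆` with `G = ⟨σ, ω⟩`, conjugating by an element of `G` that
fixes `x = m` preserves the relation. The commutator gives `0 ~ 1`, and the two elements `σ` and
`ω * ⁅σ, ω⁆ = (0 1 m+1 … n-1)` fix `m` and carry `0` to every other point.
-/

open Equiv Equiv.Perm Subgroup
open scoped commutatorElement

namespace Equiv.Perm

variable {α : Type*} [DecidableEq α]

theorem swap_mul_swap_apply_mem_of_mem_normalizer {N : Subgroup (Perm α)} {g : Perm α}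
    (hg : g ∈ normalizer (N : Set (Perm α))) {x a y : α} (hgx : g x = x)
    (hga : swap x a * swap x (g a) ∈ N) (hy : swap x a * swap x y ∈ N) :
    swap x a * swap x (g y) ∈ N := by
  have hconj : swap x (g a) * swap x (g y) ∈ N := by
    have := (mem_normalizer_iff.mp hg _).mp hy
    rwa [← hgx, swap_apply_apply, swap_apply_apply, show ∀ p q : Perm α,
      g * p * g⁻¹ * (g * q * g⁻¹) = g * (p * q) * g⁻¹ by intros; group]
  simpa [mul_assoc] using mul_mem hga hconj

theorem alternatingGroup_le_of_forall_swap_mul_swap_mem [Fintype α] {N : Subgroup (Perm α)}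
    {x a : α} (h : ∀ y, y ≠ x → swap x a * swap x y ∈ N) : alternatingGroup α ≤ N := by
  have hpair : ∀ y z, y ≠ x → z ≠ x → swap x y * swap x z ∈ N := fun y z hy hz => by
    simpa [mul_assoc] using mul_mem (inv_mem (h y hy)) (h z hz)
  have hswap : ∀ y z, z ≠ x → y ≠ z → swap y z = swap x y * swap x z * swap x y :=
    fun y z hz hyz => by
      nth_rewrite 2 [← swap_inv x y]
      rw [← swap_apply_apply, swap_apply_left, swap_apply_of_ne_of_ne hz hyz.symm]
  rw [← closure_three_cycles_eq_alternating, closure_le]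
  intro g hg
  by_cases hx : x ∈ g.support
  · have hnd := hg.nodup_iff_mem_support.mpr hx
    rw [hg.eq_swap_mul_swap_iff_mem_support.mpr hx, hswap (g x) (g (g x)) (by grind) (by grind)]
    simpa [mul_assoc] using hpair (g (g x)) (g x) (by grind) (by grind)
  · obtain ⟨a, ha⟩ := Finset.card_pos.mp (hg.card_support.symm ▸ three_pos)
    have hnd := hg.nodup_iff_mem_support.mpr ha
    have hax : a ≠ x := by rintro rfl; exact hx ha
    have hbx : g a ≠ x := by rintro h; exact hx (h ▸ apply_mem_support.mpr ha)
    have hcx : g (g a) ≠ x := by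
      rintro h; exact hx (h ▸ apply_mem_support.mpr (apply_mem_support.mpr ha))
    rw [hg.eq_swap_mul_swap_iff_mem_support.mpr ha, hswap a (g a) hbx (by grind),
      hswap (g a) (g (g a)) hcx (by grind)]
    simpa [mul_assoc] using mul_mem (mul_mem (hpair a (g a) hax hbx) (hpair a (g a) hax hbx))
      (hpair (g (g a)) (g a) hcx hbx)

end Equiv.Perm

def IsHeadCycle {n : ℕ} (m : ℕ) (σ : Perm (Fin n)) : Prop :=
  ∀ i : Fin n, (σ i : ℕ) =
    if (i : ℕ) + 1 < m then (i : ℕ) + 1 else if (i : ℕ) + 1 = m then 0 else (i : ℕ)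

def IsTailCycle {n : ℕ} (m : ℕ) (ω : Perm (Fin n)) : Prop :=
  ∀ i : Fin n, (ω i : ℕ) =
    if (i : ℕ) = 0 then m else if (i : ℕ) < m then (i : ℕ)
    else if (i : ℕ) + 1 < n then (i : ℕ) + 1 else 0

section TwoCycles

variable {n m : ℕ} {σ ω : Perm (Fin n)}

theorem commutatorElement_eq_swap_mul_swap (hm : 1 < m) (hn : m < n) (hσ : IsHeadCycle m σ)
    (hω : IsTailCycle m ω) :
    ⁅σ, ω⁆ = swap ⟨m, hn⟩ ⟨1, by omega⟩ * swap ⟨m, hn⟩ ⟨0, by omega⟩ := by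
  rw [commutatorElement_def, mul_inv_eq_iff_eq_mul, mul_inv_eq_iff_eq_mul]
  ext i
  simp only [Perm.mul_apply, swap_apply_def]
  have := hσ (ω i)
  have := hω (σ i)
  have := hω i
  have := hσ i
  grind

theorem forall_mem_of_isHeadCycle_of_isTailCycle (hm : 1 < m) (hn : m < n)
    (hσ : IsHeadCycle m σ) (hω : IsTailCycle m ω) {Z : Set (Fin n)}
    (h0 : ⟨0, by omega⟩ ∈ Z) (hσZ : ∀ y ∈ Z, σ y ∈ Z)
    (hρZ : ∀ y ∈ Z, (ω * ⁅σ, ω⁆) y ∈ Z) :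
    ∀ y : Fin n, y ≠ ⟨m, hn⟩ → y ∈ Z := by
  have hT := commutatorElement_eq_swap_mul_swap hm hn hσ hω
  have low : ∀ k (hk : k < m), (⟨k, by omega⟩ : Fin n) ∈ Z := by
    intro k hk
    induction k with
    | zero => exact h0
    | succ k ih =>
      convert hσZ _ (ih (by omega)) using 1
      ext
      rw [hσ, if_pos (by omega)]
  have high : ∀ k (hk : m + 1 + k < n), (⟨m + 1 + k, hk⟩ : Fin n) ∈ Z := by
    intro k hk
    induction k with
    | zero =>
      convert hρZ _ (low 1 hm) using 1
      ext
      rw [hT, Perm.mul_apply, Perm.mul_apply, hω]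
      simp only [swap_apply_def, Fin.ext_iff]
      grind
    | succ k ih =>
      convert hρZ _ (ih (by omega)) using 1
      ext
      rw [hT, Perm.mul_apply, Perm.mul_apply, hω]
      simp only [swap_apply_def, Fin.ext_iff]
      grind
  rintro ⟨y, hy⟩ hne
  rw [ne_eq, Fin.mk.injEq] at hne
  rcases Nat.lt_or_gt_of_ne hne with h | h
  · exact low y h
  · simpa [show m + 1 + (y - m - 1) = y by omega] using high (y - m - 1) (by omega)

theorem swap_mul_swap_mem_of_commutatorElement_mem (hm : 1 < m) (hn : m < n)
    (hσ : IsHeadCycle m σ) (hω : IsTailCycle m ω) {N : Subgroup (Perm (Fin n))}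
    (hσN : σ ∈ normalizer (N : Set (Perm (Fin n))))
    (hωN : ω ∈ normalizer (N : Set (Perm (Fin n)))) (hTN : ⁅σ, ω⁆ ∈ N) (y : Fin n)
    (hy : y ≠ ⟨m, hn⟩) : swap ⟨m, hn⟩ ⟨0, by omega⟩ * swap ⟨m, hn⟩ y ∈ N := by
  have hT := commutatorElement_eq_swap_mul_swap hm hn hσ hω
  have h01 : swap ⟨m, hn⟩ ⟨0, by omega⟩ * swap ⟨m, hn⟩ ⟨1, by omega⟩ ∈ N := by
    simpa [hT] using inv_mem hTN
  have hσ0 : σ ⟨0, by omega⟩ = ⟨1, by omega⟩ := by ext; rw [hσ]; grind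
  have hσm : σ ⟨m, hn⟩ = ⟨m, hn⟩ := by ext; rw [hσ]; grind
  obtain ⟨hρ0, hρm⟩ : (ω * ⁅σ, ω⁆) ⟨0, by omega⟩ = ⟨1, by omega⟩ ∧
      (ω * ⁅σ, ω⁆) ⟨m, hn⟩ = ⟨m, hn⟩ := by
    constructor
    all_goals
      ext
      rw [hT, Perm.mul_apply, Perm.mul_apply, hω]
      simp only [swap_apply_def, Fin.ext_iff]
      grind
  refine forall_mem_of_isHeadCycle_of_isTailCycle hm hn hσ hω
    (Z := {z | _ * swap ⟨m, hn⟩ z ∈ N}) (by simp) (fun z hz => ?_) (fun z hz => ?_) y hy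
  · exact swap_mul_swap_apply_mem_of_mem_normalizer hσN hσm (by rwa [hσ0]) hz
  · exact swap_mul_swap_apply_mem_of_mem_normalizer (mul_mem hωN (le_normalizer hTN)) hρm
      (by rwa [hρ0]) hz

end TwoCycles

theorem alternating_le_commutator_of_two_cycles
    (n m : ℕ) (hm : 1 < m) (hn : m < n)
    (σ ω : Equiv.Perm (Fin n))
    (hσ : ∀ i : Fin n, ((σ i : ℕ)) =
      if (i : ℕ) + 1 < m then (i : ℕ) + 1 else if (i : ℕ) + 1 = m then 0 else (i : ℕ))
    (hω : ∀ i : Fin n, ((ω i : ℕ)) =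
      if (i : ℕ) = 0 then m else if (i : ℕ) < m then (i : ℕ)
      else if (i : ℕ) + 1 < n then (i : ℕ) + 1 else 0) :
    alternatingGroup (Fin n) ≤
      ⁅Subgroup.closure {σ, ω}, Subgroup.closure {σ, ω}⁆ := by
  have hσG : σ ∈ closure {σ, ω} := subset_closure (by simp)
  have hωG : ω ∈ closure {σ, ω} := subset_closure (by simp)
  exact alternatingGroup_le_of_forall_swap_mul_swap_mem
    (swap_mul_swap_mem_of_commutatorElement_mem hm hn hσ hω
      (normalizer_commutator_ge_left _ _ hσG) (normalizer_commutator_ge_left _ _ hωG)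
      (commutator_mem_commutator hσG hωG))
end

section
/- The principal congruence subgroup of level two, Γ₂ = {A ∈ GL_r(ℤ) : A ≡ I (mod 2)}, is generated by the squares X_{ij}² of the elementary matrices (i ≠ j) together with the diagonal matrices T_i that agree with the identity except for a −1 in the i-th diagonal entry. -/
/-- The elementary matrix `X i j` in `SL_r(ℤ)`: identity plus an extra 1 in position (i,j). -/
def X {r : ℕ} (i j : Fin r) (h : i ≠ j) : Matrix.SpecialLinearGroup (Fin r) ℤ :=
  ⟨Matrix.transvection i j 1, Matrix.det_transvection_of_ne i j h 1⟩

/-- The diagonal matrix `T i` in `GL_r(ℤ)`: identity with a `-1` in the i-th diagonal entry. -/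
def T {r : ℕ} (i : Fin r) : GL (Fin r) ℤ :=
  ⟨Matrix.diagonal (fun k => if k = i then -1 else 1),
   Matrix.diagonal (fun k => if k = i then -1 else 1),
   by
    ext p q
    by_cases hp : p = i <;> by_cases hq : q = i <;> by_cases h : p = q <;>
      simp_all [Matrix.diagonal_mul_diagonal, Matrix.diagonal_apply, Matrix.one_apply],
   by
    ext p q
    by_cases hp : p = i <;> by_cases hq : q = i <;> by_cases h : p = q <;>
      simp_all [Matrix.diagonal_mul_diagonal, Matrix.diagonal_apply, Matrix.one_apply]⟩

/-- The principal congruence subgroup of level 2 in `GL_r(ℤ)`, as the kernel of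
reduction modulo 2. -/
def Gamma2 (r : ℕ) : Subgroup (GL (Fin r) ℤ) :=
  (Units.map ((Int.castRingHom (ZMod 2)).mapMatrix.toMonoidHom)).ker

/-!
In `Γ₂` every diagonal entry is odd and every off-diagonal entry even, so two entries of one
column never have the same absolute value. Hence a Euclidean algorithm that only adds *even*
multiples of one row to another (multiplication by the even transvections `X_{ij}^{2t}`) clears
a column down to its pivot: each step strictly lowers the sum of absolute values of the column.
The pivot then divides the determinant, so it is `±1`, and `T_k` makes it `1`; the remaining
(even) entries of its row are killed by even column operations. These operations never disturb
rows and columns already reduced to those of the identity, so treating the indices one at a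
time reduces any `A ∈ Γ₂` to `1`.
-/

namespace Matrix

namespace SpecialLinearGroup

variable {ι F : Type*} [DecidableEq ι] [Fintype ι] [CommRing F]

lemma transvection_zpow {i j : ι} (hij : i ≠ j) (b : F) (n : ℤ) :
    transvection hij b ^ n = transvection hij (n * b) := by
  induction n using Int.induction_on with
  | zero => simp
  | succ n ih => rw [_root_.zpow_add_one, ih, ← transvection_add]; push_cast; ring_nf
  | pred n ih =>
    rw [_root_.zpow_sub_one, ih, transvection_inv, ← transvection_add]; push_cast; ring_nf

lemma coe_toGL_transvection {i j : ι} (hij : i ≠ j) (b : F) :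
    ((transvection hij b).toGL : Matrix ι ι F) = Matrix.transvection i j b := rfl

end SpecialLinearGroup

variable {n α : Type*} [DecidableEq n] {S : Set n}

/-- `M` is block diagonal with an identity block on `S`. -/
def IsOneOn [Zero α] [One α] (S : Set n) (M : Matrix n n α) : Prop :=
  ∀ i j, (i ∈ S ∨ j ∈ S) → M i j = (1 : Matrix n n α) i j

lemma isOneOn_empty [Zero α] [One α] (M : Matrix n n α) : IsOneOn ∅ M := by
  simp [IsOneOn]

lemma isOneOn_one [Zero α] [One α] (S : Set n) : IsOneOn S (1 : Matrix n n α) :=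
  fun _ _ _ => rfl

lemma IsOneOn.notMem_of_ne [Zero α] [One α] {M : Matrix n n α} (h : IsOneOn S M)
    {i j : n} (hij : i ≠ j) (hM : M i j ≠ 0) : i ∉ S ∧ j ∉ S := by
  constructor <;> intro hmem <;> apply hM <;> simpa [one_apply_ne hij] using h i j (by tauto)

lemma IsOneOn.eq_one [Zero α] [One α] {M : Matrix n n α} (h : IsOneOn Set.univ M) : M = 1 :=
  Matrix.ext fun i j => h i j (.inl trivial)

lemma IsOneOn.mul [Fintype n] [NonAssocSemiring α] {M N : Matrix n n α}
    (hM : IsOneOn S M) (hN : IsOneOn S N) : IsOneOn S (M * N) := by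
  rintro i j (hi | hj)
  · have hrow : M i = (1 : Matrix n n α) i := funext fun l => hM i l (.inl hi)
    rw [mul_apply, hrow, ← mul_apply, one_mul, hN i j (.inl hi)]
  · have hcol : ∀ l, N l j = (1 : Matrix n n α) l j := fun l => hN l j (.inr hj)
    simp_rw [mul_apply, hcol, ← mul_apply, mul_one, hM i j (.inr hj)]

lemma isOneOn_diagonal [Zero α] [One α] {d : n → α} (hd : ∀ i ∈ S, d i = 1) :
    IsOneOn S (diagonal d) := by
  rintro i j (hi | hj) <;> by_cases hij : i = j
  all_goals simp_all [one_apply]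

lemma isOneOn_transvection [CommRing α] {i j : n} (hi : i ∉ S) (hj : j ∉ S)
    (c : α) : IsOneOn S (transvection i j c) := by
  rintro k l hkl
  simp only [transvection, add_apply, single_apply, add_eq_left, ite_eq_right_iff, and_imp]
  rintro rfl rfl
  tauto

lemma apply_self_dvd_det [Fintype n] [CommRing α] {M : Matrix n n α} {k : n}
    (hcol : ∀ i, i ≠ k → M i k = 0) : M k k ∣ M.det := by
  have hM : M = updateCol M k (M k k • Pi.single k 1) := by
    refine (updateCol_eq_self M k).symm.trans (congrArg _ (funext fun i => ?_))
    by_cases hi : i = k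
    · subst hi; simp
    · simp [hi, hcol i hi]
  have hdet : M.det = M k k * (updateCol M k (Pi.single k 1)).det := by
    rw [← det_updateCol_smul, ← hM]
  exact Dvd.intro _ hdet.symm

end Matrix

lemma Int.exists_natAbs_add_two_mul_mul_le (x : ℤ) {a : ℤ} (ha : a ≠ 0) :
    ∃ t : ℤ, (x + 2 * t * a).natAbs ≤ a.natAbs := by
  set m : ℤ := 2 * a.natAbs
  set q := (x + a.natAbs) / m
  -- `x + 2 * t * a` with this `t` is the representative of `x` modulo `2 * |a|` in `[-|a|, |a|)`
  refine ⟨-q * a.sign, ?_⟩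
  have hm : 0 < m := by omega
  have hlo := Int.emod_nonneg (x + a.natAbs) hm.ne'
  have hhi := Int.emod_lt_of_pos (x + a.natAbs) hm
  have hshift : x + 2 * (-q * a.sign) * a = (x + a.natAbs) % m - a.natAbs := by
    rw [Int.emod_def, show 2 * (-q * a.sign) * a = -(2 * q * (a.sign * a)) by ring,
      Int.sign_mul_self_eq_abs, ← Int.natCast_natAbs]
    ring
  rw [hshift]
  omega

lemma Int.natAbs_ne_natAbs_of_even_of_odd {x y : ℤ} (hx : Even x) (hy : Odd y) :
    x.natAbs ≠ y.natAbs := by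
  obtain ⟨u, rfl⟩ := hx
  obtain ⟨v, rfl⟩ := hy
  omega

lemma Fintype.sum_lt_sum_of_apply_lt_of_eq {ι M : Type*} [Fintype ι] [AddCommMonoid M]
    [PartialOrder M] [IsOrderedCancelAddMonoid M] {f g : ι → M} (i : ι) (hi : g i < f i)
    (hne : ∀ l, l ≠ i → g l = f l) : ∑ l, g l < ∑ l, f l := by
  refine Finset.sum_lt_sum (fun l _ => ?_) ⟨i, Finset.mem_univ i, hi⟩
  by_cases hl : l = i
  · exact hl ▸ hi.le
  · rw [hne l hl]

open Matrix

namespace Gamma2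

variable {r : ℕ}

def generators (r : ℕ) : Set (GL (Fin r) ℤ) :=
  {A | ∃ i j : Fin r, ∃ h : i ≠ j, A = (X i j h).toGL ^ 2} ∪ {A | ∃ i : Fin r, A = T i}

lemma X_toGL_sq {i j : Fin r} (h : i ≠ j) :
    (X i j h).toGL ^ 2 = (SpecialLinearGroup.transvection h 2).toGL := by
  rw [← map_pow, sq, show X i j h = SpecialLinearGroup.transvection h 1 from rfl,
    ← SpecialLinearGroup.transvection_add, one_add_one_eq_two]

lemma transvection_two_mul_mem_closure {i j : Fin r} (h : i ≠ j) (t : ℤ) :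
    (SpecialLinearGroup.transvection h (2 * t)).toGL ∈ Subgroup.closure (generators r) := by
  have := zpow_mem (Subgroup.subset_closure (Or.inl ⟨i, j, h, rfl⟩) :
    (X i j h).toGL ^ 2 ∈ Subgroup.closure (generators r)) t
  rwa [X_toGL_sq, ← map_zpow, SpecialLinearGroup.transvection_zpow, mul_comm] at this

lemma T_mem_closure (i : Fin r) : T i ∈ Subgroup.closure (generators r) :=
  Subgroup.subset_closure (.inr ⟨i, rfl⟩)

lemma coe_T (i : Fin r) :
    (T i : Matrix (Fin r) (Fin r) ℤ) = diagonal fun k => if k = i then -1 else 1 := rfl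

lemma closure_generators_le : Subgroup.closure (generators r) ≤ Gamma2 r := by
  rw [Subgroup.closure_le]
  rintro _ (⟨i, j, h, rfl⟩ | ⟨i, rfl⟩) <;> rw [SetLike.mem_coe, Gamma2, MonoidHom.mem_ker]
  · rw [X_toGL_sq]
    ext k l
    have h2 : (2 : ZMod 2) = 0 := rfl
    by_cases hkl : k = l <;>
      simp [SpecialLinearGroup.transvection_coe, single_apply, one_apply, hkl, h2]
  · ext k l
    have hneg : ((-1 : ℤ) : ZMod 2) = 1 := rfl
    by_cases hkl : k = l <;> by_cases hki : k = i <;>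
      simp [coe_T, diagonal_apply, one_apply, hkl, hki, hneg]

lemma intCast_apply_eq_one_apply {A : GL (Fin r) ℤ} (hA : A ∈ Gamma2 r) (i j : Fin r) :
    (A i j : ZMod 2) = (1 : Matrix (Fin r) (Fin r) (ZMod 2)) i j :=
  congrArg (fun B : GL (Fin r) (ZMod 2) => B i j) hA

lemma odd_apply_self {A : GL (Fin r) ℤ} (hA : A ∈ Gamma2 r) (i : Fin r) : Odd (A i i) := by
  simpa [ZMod.intCast_eq_one_iff_odd] using intCast_apply_eq_one_apply hA i i

lemma even_apply_of_ne {A : GL (Fin r) ℤ} (hA : A ∈ Gamma2 r) {i j : Fin r} (h : i ≠ j) :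
    Even (A i j) := by
  simpa [ZMod.intCast_eq_zero_iff_even, one_apply, h] using intCast_apply_eq_one_apply hA i j

lemma exists_sum_natAbs_mul_apply_lt {S : Set (Fin r)} {A : GL (Fin r) ℤ} {i j k : Fin r}
    (hij : i ≠ j) (hiS : i ∉ S) (hjS : j ∉ S) (hj : A j k ≠ 0)
    (hlt : (A j k).natAbs < (A i k).natAbs) :
    ∃ E ∈ Subgroup.closure (generators r), IsOneOn S (E : Matrix (Fin r) (Fin r) ℤ) ∧
      ∑ l, ((E * A) l k).natAbs < ∑ l, (A l k).natAbs := by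
  obtain ⟨t, ht⟩ := Int.exists_natAbs_add_two_mul_mul_le (A i k) hj
  refine ⟨(SpecialLinearGroup.transvection hij (2 * t)).toGL,
    transvection_two_mul_mem_closure hij t, isOneOn_transvection hiS hjS _, ?_⟩
  refine Fintype.sum_lt_sum_of_apply_lt_of_eq i ?_ fun l hl => ?_
  · rw [Units.val_mul, SpecialLinearGroup.coe_toGL_transvection, transvection_mul_apply_same]
    exact ht.trans_lt hlt
  · rw [Units.val_mul, SpecialLinearGroup.coe_toGL_transvection,
      transvection_mul_apply_of_ne _ _ _ _ hl]

variable {S : Set (Fin r)}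

lemma exists_mul_apply_eq_zero_of_ne (k : Fin r) (A : GL (Fin r) ℤ) (hA : A ∈ Gamma2 r)
    (hAS : IsOneOn S (A : Matrix (Fin r) (Fin r) ℤ)) :
    ∃ P ∈ Subgroup.closure (generators r), IsOneOn S (P : Matrix (Fin r) (Fin r) ℤ) ∧
      ∀ i, i ≠ k → (P * A) i k = 0 := by
  induction hN : ∑ l, (A l k).natAbs using Nat.strong_induction_on generalizing A with
  | _ N ih =>
  by_cases hcol : ∀ i, i ≠ k → A i k = 0
  · exact ⟨1, one_mem _, isOneOn_one S, by simpa using hcol⟩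
  push Not at hcol
  obtain ⟨m, hmk, hm⟩ := hcol
  obtain ⟨hmS, hkS⟩ := hAS.notMem_of_ne hmk hm
  have hodd := odd_apply_self hA k
  obtain ⟨E, hE, hES, hlt⟩ : ∃ E ∈ Subgroup.closure (generators r),
      IsOneOn S (E : Matrix (Fin r) (Fin r) ℤ) ∧
        ∑ l, ((E * A) l k).natAbs < ∑ l, (A l k).natAbs := by
    -- entries of different parity never have equal absolute value
    rcases (Int.natAbs_ne_natAbs_of_even_of_odd (even_apply_of_ne hA hmk) hodd).lt_or_gt with
      h | h
    · exact exists_sum_natAbs_mul_apply_lt hmk.symm hkS hmS hm h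
    · exact exists_sum_natAbs_mul_apply_lt hmk hmS hkS (by rintro h0; simp [h0] at hodd) h
  obtain ⟨P, hP, hPS, hPA⟩ :=
    ih _ (hN ▸ hlt) (E * A) (mul_mem (closure_generators_le hE) hA) (hES.mul hAS) rfl
  exact ⟨P * E, mul_mem hP hE, hPS.mul hES, fun i hi => by rw [mul_assoc]; exact hPA i hi⟩

lemma exists_mul_apply_eq_one_apply (k : Fin r) (A : GL (Fin r) ℤ) (hA : A ∈ Gamma2 r)
    (hAS : IsOneOn S (A : Matrix (Fin r) (Fin r) ℤ)) :
    ∃ P ∈ Subgroup.closure (generators r), IsOneOn S (P : Matrix (Fin r) (Fin r) ℤ) ∧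
      ∀ i, (P * A) i k = (1 : Matrix (Fin r) (Fin r) ℤ) i k := by
  obtain ⟨P, hP, hPS, hcol⟩ := exists_mul_apply_eq_zero_of_ne k A hA hAS
  have hunit : IsUnit ((P * A) k k) :=
    isUnit_of_dvd_unit (apply_self_dvd_det hcol) ((isUnit_iff_isUnit_det _).1 (P * A).isUnit)
  have hcol_pivot : ∀ i, (P * A) i k = (P * A) k k * (1 : Matrix (Fin r) (Fin r) ℤ) i k := by
    intro i
    by_cases hi : i = k
    · subst hi; simp
    · simp [hcol i hi, one_apply_ne hi]
  rcases Int.isUnit_iff.1 hunit with h1 | hm1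
  · exact ⟨P, hP, hPS, fun i => by rw [hcol_pivot, h1, one_mul]⟩
  · have hkS : k ∉ S := fun hk => by
      have h : (P * A) k k = _ := (hPS.mul hAS) k k (.inl hk)
      rw [hm1, one_apply_eq] at h
      norm_num at h
    refine ⟨T k * P, mul_mem (T_mem_closure k) hP, (isOneOn_diagonal ?_).mul hPS, fun i => ?_⟩
    · intro j hj
      simp [ne_of_mem_of_not_mem hj hkS]
    · rw [mul_assoc, Units.val_mul, coe_T, diagonal_mul, hcol_pivot, hm1]
      by_cases hi : i = k <;> simp [hi]

lemma exists_mul_isOneOn_insert (k : Fin r) (B : GL (Fin r) ℤ) (hB : B ∈ Gamma2 r)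
    (hBS : IsOneOn S (B : Matrix (Fin r) (Fin r) ℤ))
    (hcol : ∀ i, B i k = (1 : Matrix (Fin r) (Fin r) ℤ) i k) :
    ∃ Q ∈ Subgroup.closure (generators r),
      IsOneOn (insert k S) ((B * Q : GL (Fin r) ℤ) : Matrix (Fin r) (Fin r) ℤ) := by
  induction hN : ∑ l, (B k l).natAbs using Nat.strong_induction_on generalizing B with
  | _ N ih =>
  by_cases hrow : ∀ j, j ≠ k → B k j = 0
  · refine ⟨1, one_mem _, ?_⟩
    rw [mul_one]
    rintro i j ((rfl | hi) | (rfl | hj))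
    · by_cases hj : j = i
      · exact hj ▸ hcol j
      · rw [hrow j hj, one_apply_ne (Ne.symm hj)]
    · exact hBS i j (.inl hi)
    · exact hcol i
    · exact hBS i j (.inr hj)
  push Not at hrow
  obtain ⟨j, hjk, hj⟩ := hrow
  obtain ⟨hkS, hjS⟩ := hBS.notMem_of_ne hjk.symm hj
  obtain ⟨t, ht⟩ := even_apply_of_ne hB hjk.symm
  set E := (SpecialLinearGroup.transvection hjk.symm (2 * -t)).toGL
  have hE : E ∈ Subgroup.closure (generators r) := transvection_two_mul_mem_closure _ _
  have hcolE : ∀ i, (B * E) i k = (1 : Matrix (Fin r) (Fin r) ℤ) i k := fun i => by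
    rw [Units.val_mul, SpecialLinearGroup.coe_toGL_transvection,
      mul_transvection_apply_of_ne _ _ _ _ hjk.symm, hcol]
  have hlt : ∑ l, ((B * E) k l).natAbs < ∑ l, (B k l).natAbs := by
    refine Fintype.sum_lt_sum_of_apply_lt_of_eq j ?_ fun l hl => ?_
    · rw [Units.val_mul, SpecialLinearGroup.coe_toGL_transvection, mul_transvection_apply_same,
        hcol, one_apply_eq]
      rw [ht] at hj ⊢
      omega
    · rw [Units.val_mul, SpecialLinearGroup.coe_toGL_transvection,
        mul_transvection_apply_of_ne _ _ _ _ hl]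
  obtain ⟨Q, hQ, hQS⟩ := ih _ (hN ▸ hlt) (B * E) (mul_mem hB (closure_generators_le hE))
    (hBS.mul (isOneOn_transvection hkS hjS _)) hcolE rfl
  exact ⟨E * Q, mul_mem hE hQ, by rw [← mul_assoc]; exact hQS⟩

lemma exists_mul_mul_isOneOn_insert (k : Fin r) (A : GL (Fin r) ℤ) (hA : A ∈ Gamma2 r)
    (hAS : IsOneOn S (A : Matrix (Fin r) (Fin r) ℤ)) :
    ∃ P ∈ Subgroup.closure (generators r), ∃ Q ∈ Subgroup.closure (generators r),
      IsOneOn (insert k S) ((P * A * Q : GL (Fin r) ℤ) : Matrix (Fin r) (Fin r) ℤ) := by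
  obtain ⟨P, hP, hPS, hcol⟩ := exists_mul_apply_eq_one_apply k A hA hAS
  obtain ⟨Q, hQ, hQS⟩ := exists_mul_isOneOn_insert k (P * A)
    (mul_mem (closure_generators_le hP) hA) (hPS.mul hAS) hcol
  exact ⟨P, hP, Q, hQ, hQS⟩

lemma exists_mul_mul_isOneOn (s : Finset (Fin r)) (A : GL (Fin r) ℤ) (hA : A ∈ Gamma2 r) :
    ∃ P ∈ Subgroup.closure (generators r), ∃ Q ∈ Subgroup.closure (generators r),
      IsOneOn (s : Set (Fin r)) ((P * A * Q : GL (Fin r) ℤ) : Matrix (Fin r) (Fin r) ℤ) := by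
  induction s using Finset.induction_on with
  | empty => exact ⟨1, one_mem _, 1, one_mem _, by simpa using isOneOn_empty _⟩
  | insert k s _ ih =>
    obtain ⟨P, hP, Q, hQ, hs⟩ := ih
    have hPAQ := mul_mem (mul_mem (closure_generators_le hP) hA) (closure_generators_le hQ)
    obtain ⟨P', hP', Q', hQ', hks⟩ := exists_mul_mul_isOneOn_insert k (P * A * Q) hPAQ hs
    refine ⟨P' * P, mul_mem hP' hP, Q * Q', mul_mem hQ hQ', ?_⟩
    rw [Finset.coe_insert]
    simpa only [mul_assoc] using hks

lemma le_closure_generators : Gamma2 r ≤ Subgroup.closure (generators r) := by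
  intro A hA
  obtain ⟨P, hP, Q, hQ, h⟩ := exists_mul_mul_isOneOn Finset.univ A hA
  rw [Finset.coe_univ] at h
  have hPAQ : P * A * Q = 1 := Units.ext h.eq_one
  have hA' : A = P⁻¹ * Q⁻¹ := calc
    A = P⁻¹ * (P * A * Q) * Q⁻¹ := by group
    _ = P⁻¹ * Q⁻¹ := by rw [hPAQ, mul_one]
  exact hA' ▸ mul_mem (inv_mem hP) (inv_mem hQ)

end Gamma2

theorem gamma2_generated_by_squares_and_diagonal (r : ℕ) :
    Subgroup.closure
      ({A | ∃ i j : Fin r, ∃ h : i ≠ j, A = (X i j h).toGL ^ 2} ∪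
       {A | ∃ i : Fin r, A = T i}) = Gamma2 r :=
  le_antisymm Gamma2.closure_generators_le Gamma2.le_closure_generators
end

section
/- Let U be a finite-index subgroup of the free group F_r, and let NT(U) = ⋂_{v ∈ F_r} v⁻¹Uv be its normal core. If γ : F_r → F_r is the automorphism sending g_i ↦ w·g_i and fixing all other basis elements, where w ∈ NT(U) does not involve the generator g_i, then γ stabilizes U, i.e., γ(U) = U. -/
theorem multiply_generator_by_normal_core_word_stabilizes
    (r : ℕ) (U : Subgroup (FreeGroup (Fin r))) (hfi : U.FiniteIndex)
    (i : Fin r) (w : FreeGroup (Fin r))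
    (hw : w ∈ U.normalCore)
    (hw' : w ∈ Subgroup.closure (FreeGroup.of '' {j : Fin r | j ≠ i}))
    (γ : MulAut (FreeGroup (Fin r)))
    (hγ : ∀ j : Fin r, γ (FreeGroup.of j) =
      if j = i then w * FreeGroup.of i else FreeGroup.of j) :
    U.map γ.toMonoidHom = U := by
  set N := U.normalCore with hN
  have hNU : N ≤ U := Subgroup.normalCore_le U
  -- The quotient map by the normal core
  let π := QuotientGroup.mk' N
  have hcomp : π.comp γ.toMonoidHom = π := by
    apply FreeGroup.ext_hom
    intro j
    simp only [MonoidHom.comp_apply, MulEquiv.coe_toMonoidHom, hγ j]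
    rcases eq_or_ne j i with hj | hj
    · subst hj
      simp only [map_mul]
      simp only [if_true, eq_self_iff_true]
      rw [map_mul]
      have hw1 : π w = 1 := (QuotientGroup.eq_one_iff w).mpr hw
      rw [hw1, one_mul]
    · simp [if_neg hj]
  have key : ∀ x : FreeGroup (Fin r), π (γ x) = π x := by
    intro x
    simpa using DFunLike.congr_fun hcomp x
  have mem_of : ∀ x : FreeGroup (Fin r), π x = π (γ x) → (γ x ∈ U ↔ x ∈ U) := by
    intro x hx
    have hmem : x⁻¹ * γ x ∈ N := QuotientGroup.eq.mp hx
    have hU : x⁻¹ * γ x ∈ U := hNU hmem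
    constructor
    · intro h
      have : x = γ x * (x⁻¹ * γ x)⁻¹ := by group
      rw [this]; exact U.mul_mem h (U.inv_mem hU)
    · intro h
      have : γ x = x * (x⁻¹ * γ x) := by group
      rw [this]; exact U.mul_mem h hU
  apply le_antisymm
  · rintro _ ⟨x, hx, rfl⟩
    exact (mem_of x (key x).symm).mpr hx
  · intro x hx
    refine ⟨γ⁻¹ x, ?_, by simp⟩
    have h1 : π (γ⁻¹ x) = π (γ (γ⁻¹ x)) := by
      rw [key (γ⁻¹ x)]
    have := mem_of (γ⁻¹ x) h1
    have h2 : γ (γ⁻¹ x) = x := by simp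
    rw [h2] at this
    exact this.mp hx
end

section
/- Let U ≤ F_r be a finite-index subgroup with coset action π : F_r → Sym(F_r/U), and define v ∈ (ℤ/2ℤ)^r by v_i = 0 if π(g_i) is an even permutation and v_i = 1 if π(g_i) is odd. Then the image in GL_r(ℤ/2ℤ) of B(Stab_{Aut(F_r)}(U)) is contained in S(v) = {M : v·M = v}, where B : Aut(F_r) → GL_r(ℤ) is the map induced by abelianization. -/
/-!
The map `w ↦ sign (π w)` is a homomorphism `F_r → ℤˣ ≅ ℤ/2`, so it factors through the
abelianization: its value on `w` is `∑ᵢ vᵢ · (count of gᵢ in w) mod 2`, and hence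
`(v · B(γ))_j` is its value on `γ (g j)`. An automorphism `γ` fixing `U` permutes the cosets
`F_r/U` and conjugates `π w` into `π (γ w)`, so this parity is `γ`-invariant and
`(v · B(γ))_j = v_j`.
-/

/-- The signed count of occurrences of the generator `g i` in a word of the free group,
as a homomorphism to `ℤ` (written multiplicatively). -/
def count {r : ℕ} (i : Fin r) : FreeGroup (Fin r) →* Multiplicative ℤ :=
  FreeGroup.lift fun j => Multiplicative.ofAdd (if j = i then (1 : ℤ) else 0)

/-- The abelianization matrix `B γ` of an automorphism `γ` of the free group:
its (i,j) entry is the signed count of `g i` in `γ (g j)`. -/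
def B {r : ℕ} (γ : MulAut (FreeGroup (Fin r))) : Matrix (Fin r) (Fin r) ℤ :=
  Matrix.of fun i j => Multiplicative.toAdd (count i (γ (FreeGroup.of j)))

section CosetPerm

variable {G G' : Type*} [Group G] [Group G'] {H : Subgroup G} {H' : Subgroup G'}
  (e : G ≃* G') (h : H.map e.toMonoidHom = H')

include h in
theorem Subgroup.apply_mem_iff_of_map_eq {x : G} : e x ∈ H' ↔ x ∈ H := by
  rw [← h, Subgroup.mem_map_equiv, MulEquiv.symm_apply_apply]

def QuotientGroup.equivOfMapEq : G ⧸ H ≃ G' ⧸ H' :=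
  Quotient.congr e.toEquiv fun a b => by
    rw [QuotientGroup.leftRel_apply, QuotientGroup.leftRel_apply, MulEquiv.toEquiv_eq_coe,
      MulEquiv.coe_toEquiv, ← map_inv, ← map_mul, Subgroup.apply_mem_iff_of_map_eq e h]

theorem QuotientGroup.equivOfMapEq_smul (w : G) (q : G ⧸ H) :
    QuotientGroup.equivOfMapEq e h (w • q) = e w • QuotientGroup.equivOfMapEq e h q := by
  induction q using QuotientGroup.induction_on with
  | H x => exact congrArg QuotientGroup.mk (map_mul e w x)

include h in
theorem toPerm_apply_eq_conj_equivOfMapEq (w : G) :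
    (MulAction.toPerm (e w) : Equiv.Perm (G' ⧸ H')) =
      ((QuotientGroup.equivOfMapEq e h).symm.trans (MulAction.toPerm w)).trans
        (QuotientGroup.equivOfMapEq e h) := by
  ext q
  simp [QuotientGroup.equivOfMapEq_smul]

include h in
theorem sign_toPerm_apply_of_map_eq [Fintype (G ⧸ H)] [DecidableEq (G ⧸ H)]
    [Fintype (G' ⧸ H')] [DecidableEq (G' ⧸ H')] (w : G) :
    Equiv.Perm.sign (MulAction.toPerm (e w) : Equiv.Perm (G' ⧸ H')) =
      Equiv.Perm.sign (MulAction.toPerm w : Equiv.Perm (G ⧸ H)) := by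
  rw [toPerm_apply_eq_conj_equivOfMapEq e h, Equiv.Perm.sign_symm_trans_trans]

end CosetPerm

def unitsIntParity : ℤˣ →* Multiplicative (ZMod 2) where
  toFun u := Multiplicative.ofAdd (if u = 1 then 0 else 1)
  map_one' := by simp
  map_mul' a b := by
    rcases Int.units_eq_one_or a with rfl | rfl <;>
      rcases Int.units_eq_one_or b with rfl | rfl <;> decide

theorem sum_toAdd_mul_count {R : Type*} [Ring R] {r : ℕ}
    (φ : FreeGroup (Fin r) →* Multiplicative R) (w : FreeGroup (Fin r)) :
    ∑ i, Multiplicative.toAdd (φ (FreeGroup.of i)) * ((Multiplicative.toAdd (count i w) : ℤ) : R)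
      = Multiplicative.toAdd (φ w) := by
  induction w using FreeGroup.induction_on with
  | C1 => simp
  | of j => simp [count, FreeGroup.lift_apply_of]
  | inv_of j ih => simpa using ih
  | mul x y ihx ihy => simp [mul_add, Finset.sum_add_distrib, ihx, ihy]

theorem vecMul_map_B {R : Type*} [Ring R] {r : ℕ} (φ : FreeGroup (Fin r) →* Multiplicative R)
    (γ : MulAut (FreeGroup (Fin r))) :
    Matrix.vecMul (fun i => Multiplicative.toAdd (φ (FreeGroup.of i)))
        ((B γ).map (Int.castRingHom R)) =
      fun j => Multiplicative.toAdd (φ (γ (FreeGroup.of j))) := by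
  funext j
  simpa [Matrix.vecMul, dotProduct, B] using sum_toAdd_mul_count φ (γ (FreeGroup.of j))

theorem image_of_stabilizer_contained_in_row_vector_stabilizer_general
    (r : ℕ) (U : Subgroup (FreeGroup (Fin r)))
    [Fintype (FreeGroup (Fin r) ⧸ U)] [DecidableEq (FreeGroup (Fin r) ⧸ U)]
    (v : Fin r → ZMod 2)
    (hv : ∀ i : Fin r,
      v i = if Equiv.Perm.sign
          (MulAction.toPermHom (FreeGroup (Fin r)) (FreeGroup (Fin r) ⧸ U)
            (FreeGroup.of i)) = 1
        then 0 else 1)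
    (γ : MulAut (FreeGroup (Fin r))) (hγ : U.map γ.toMonoidHom = U) :
    Matrix.vecMul v ((B γ).map (Int.castRingHom (ZMod 2))) = v := by
  let parity : FreeGroup (Fin r) →* Multiplicative (ZMod 2) :=
    unitsIntParity.comp (Equiv.Perm.sign.comp (MulAction.toPermHom _ (FreeGroup (Fin r) ⧸ U)))
  have hv_parity : (fun i => Multiplicative.toAdd (parity (FreeGroup.of i))) = v :=
    funext fun i => (hv i).symm
  have hparity_γ : ∀ w, parity (γ w) = parity w := fun w =>
    congrArg unitsIntParity (sign_toPerm_apply_of_map_eq γ hγ w)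
  rw [← hv_parity, vecMul_map_B]
  simp only [hparity_γ]

theorem image_of_stabilizer_contained_in_row_vector_stabilizer
    (r : ℕ) (U : Subgroup (FreeGroup (Fin r))) (hfi : U.FiniteIndex)
    [Fintype (FreeGroup (Fin r) ⧸ U)] [DecidableEq (FreeGroup (Fin r) ⧸ U)]
    (v : Fin r → ZMod 2)
    (hv : ∀ i : Fin r,
      v i = if Equiv.Perm.sign
          (MulAction.toPermHom (FreeGroup (Fin r)) (FreeGroup (Fin r) ⧸ U)
            (FreeGroup.of i)) = 1
        then 0 else 1)
    (γ : MulAut (FreeGroup (Fin r))) (hγ : U.map γ.toMonoidHom = U) :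
    Matrix.vecMul v ((B γ).map (Int.castRingHom (ZMod 2))) = v :=
  image_of_stabilizer_contained_in_row_vector_stabilizer_general r U v hv γ hγ
end

section
/- Let n > m > 1, σ = (1,…,m) and ω = (1,m+1,…,n) in S_n, and let 1 < i ≤ m < j ≤ n. Then the 3-cycle (1,i,j) equals σ^{i−1} ∘ ω^{j−m} ∘ σ^{−(i−1)} ∘ ω^{−(j−m)}. -/
private lemma mod_two_lt (u v : ℕ) (_hv : 0 < v) (h : u < 2 * v) :
    u % v = if u < v then u else u - v := by
  rcases Nat.lt_or_ge u v with h1 | h1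
  · rw [if_pos h1, Nat.mod_eq_of_lt h1]
  · rw [if_neg (by omega), Nat.mod_eq_sub_mod h1, Nat.mod_eq_of_lt (by omega)]

private lemma sigma_pow (n m : ℕ) (hm : 1 < m)
    (σ : Equiv.Perm (Fin n))
    (hσ : ∀ i : Fin n, ((σ i : ℕ)) =
      if (i : ℕ) + 1 < m then (i : ℕ) + 1 else if (i : ℕ) + 1 = m then 0 else (i : ℕ)) :
    ∀ (k : ℕ) (x : Fin n), (((σ ^ k) x : ℕ)) =
      if m ≤ (x : ℕ) then (x : ℕ) else ((x : ℕ) + k) % m := by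
  intro k
  induction k with
  | zero =>
    intro x
    simp only [pow_zero, Equiv.Perm.coe_one, id_eq]
    rcases Nat.lt_or_ge (x : ℕ) m with h | h
    · rw [if_neg (by omega), Nat.add_zero, Nat.mod_eq_of_lt h]
    · rw [if_pos h]
  | succ k ih =>
    intro x
    rw [pow_succ', Equiv.Perm.mul_apply]
    have hy := hσ ((σ ^ k) x)
    rw [ih x] at hy
    rcases Nat.lt_or_ge (x : ℕ) m with h | h
    · rw [if_neg (show ¬ m ≤ (x : ℕ) by omega)] at hy
      rw [if_neg (by omega)]
      have hul : ((x : ℕ) + k) % m < m := Nat.mod_lt _ (by omega)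
      have h1m : 1 % m = 1 := Nat.mod_eq_of_lt hm
      have key : ((x : ℕ) + (k + 1)) % m = (((x : ℕ) + k) % m + 1) % m := by
        conv_lhs => rw [← Nat.add_assoc, Nat.add_mod, h1m]
      rw [hy, key]
      rcases Nat.lt_or_ge (((x : ℕ) + k) % m + 1) m with h1 | h1
      · rw [if_pos h1, Nat.mod_eq_of_lt h1]
      · have h2 : ((x : ℕ) + k) % m + 1 = m := by omega
        rw [if_neg (by omega), if_pos h2, h2, Nat.mod_self]
    · rw [if_pos h] at hy
      rw [if_pos h]
      rw [if_neg (by omega), if_neg (by omega)] at hy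
      exact hy

private lemma omega_pow (n m : ℕ) (hm : 1 < m) (hn : m < n)
    (ω : Equiv.Perm (Fin n))
    (hω : ∀ i : Fin n, ((ω i : ℕ)) =
      if (i : ℕ) = 0 then m else if (i : ℕ) < m then (i : ℕ)
      else if (i : ℕ) + 1 < n then (i : ℕ) + 1 else 0) :
    ∀ (k : ℕ) (x : Fin n), (((ω ^ k) x : ℕ)) =
      if (x : ℕ) = 0 ∨ m ≤ (x : ℕ) then
        (if ((if (x : ℕ) = 0 then 0 else (x : ℕ) - m + 1) + k) % (n - m + 1) = 0 then 0
         else m + ((if (x : ℕ) = 0 then 0 else (x : ℕ) - m + 1) + k) % (n - m + 1) - 1)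
      else (x : ℕ) := by
  have hL : 2 ≤ n - m + 1 := by omega
  intro k
  induction k with
  | zero =>
    intro x
    have hxn : (x : ℕ) < n := x.isLt
    simp only [pow_zero, Equiv.Perm.coe_one, id_eq]
    by_cases hx0 : (x : ℕ) = 0
    · rw [if_pos (Or.inl hx0), if_pos hx0, hx0]
      rw [Nat.zero_add, Nat.zero_mod, if_pos rfl]
    · by_cases hxm : m ≤ (x : ℕ)
      · rw [if_pos (Or.inr hxm), if_neg hx0]
        have : ((x : ℕ) - m + 1 + 0) % (n - m + 1) = (x : ℕ) - m + 1 := by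
          rw [Nat.add_zero, Nat.mod_eq_of_lt (by omega)]
        rw [this, if_neg (by omega)]
        omega
      · rw [if_neg (by tauto)]
  | succ k ih =>
    intro x
    rw [pow_succ', Equiv.Perm.mul_apply]
    have hy := hω ((ω ^ k) x)
    rw [ih x] at hy
    by_cases hx : (x : ℕ) = 0 ∨ m ≤ (x : ℕ)
    · rw [if_pos hx] at hy
      rw [if_pos hx]
      set idx := (if (x : ℕ) = 0 then 0 else (x : ℕ) - m + 1) with hidx
      set L := n - m + 1 with hLdef
      have h1L : 1 % L = 1 := Nat.mod_eq_of_lt (by omega)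
      have key : (idx + (k + 1)) % L = ((idx + k) % L + 1) % L := by
        conv_lhs => rw [← Nat.add_assoc, Nat.add_mod, h1L]
      have htL : (idx + k) % L < L := Nat.mod_lt _ (by omega)
      rw [key]
      by_cases ht : (idx + k) % L = 0
      · rw [if_pos ht] at hy
        rw [if_pos rfl] at hy
        rw [hy, ht, Nat.zero_add, h1L, if_neg (by omega)]
        omega
      · rw [if_neg ht] at hy
        rw [hy, if_neg (by omega), if_neg (by omega)]
        by_cases htn : m + (idx + k) % L - 1 + 1 < n
        · rw [if_pos htn]
          have : ((idx + k) % L + 1) % L = (idx + k) % L + 1 :=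
            Nat.mod_eq_of_lt (by omega)
          rw [this, if_neg (by omega)]
          omega
        · rw [if_neg htn]
          have hteq : (idx + k) % L + 1 = L := by omega
          rw [hteq, Nat.mod_self, if_pos rfl]
    · rw [if_neg hx] at hy
      rw [if_neg hx]
      have hx1 : ¬ ((x : ℕ) = 0) ∧ (x : ℕ) < m := by
        push_neg at hx; omega
      rw [if_neg hx1.1, if_pos hx1.2] at hy
      exact hy

theorem three_cycle_as_commutator
    (n m : ℕ) (hm : 1 < m) (hn : m < n)
    (σ ω : Equiv.Perm (Fin n))
    (hσ : ∀ i : Fin n, ((σ i : ℕ)) =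
      if (i : ℕ) + 1 < m then (i : ℕ) + 1 else if (i : ℕ) + 1 = m then 0 else (i : ℕ))
    (hω : ∀ i : Fin n, ((ω i : ℕ)) =
      if (i : ℕ) = 0 then m else if (i : ℕ) < m then (i : ℕ)
      else if (i : ℕ) + 1 < n then (i : ℕ) + 1 else 0)
    (a b : Fin n) (ha0 : 0 < (a : ℕ)) (ham : (a : ℕ) < m) (hbm : m ≤ (b : ℕ)) :
    ∀ x : Fin n,
      (((σ ^ (a : ℕ) * ω ^ ((b : ℕ) - m + 1) * (σ ^ (a : ℕ))⁻¹ * (ω ^ ((b : ℕ) - m + 1))⁻¹) x : ℕ)) =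
        if (x : ℕ) = 0 then (a : ℕ) else if (x : ℕ) = (a : ℕ) then (b : ℕ)
        else if (x : ℕ) = (b : ℕ) then 0 else (x : ℕ) := by
  intro x
  have hbn : (b : ℕ) < n := b.isLt
  have han : (a : ℕ) < n := a.isLt
  have hxn : (x : ℕ) < n := x.isLt
  -- σ ^ m = 1
  have hσmv : ∀ y : Fin n, (((σ ^ m) y : ℕ)) = (y : ℕ) := by
    intro y
    rw [sigma_pow n m hm σ hσ m y]
    rcases Nat.lt_or_ge (y : ℕ) m with h | h
    · rw [if_neg (by omega), Nat.add_mod_right, Nat.mod_eq_of_lt h]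
    · rw [if_pos h]
  have hσm1 : σ ^ m = 1 := by
    apply Equiv.ext
    intro y
    apply Fin.ext
    simp only [Equiv.Perm.coe_one, id_eq]
    exact hσmv y
  -- ω ^ (n - m + 1) = 1
  have hωLv : ∀ y : Fin n, (((ω ^ (n - m + 1)) y : ℕ)) = (y : ℕ) := by
    intro y
    have hyn : (y : ℕ) < n := y.isLt
    rw [omega_pow n m hm hn ω hω (n - m + 1) y]
    by_cases hy0 : (y : ℕ) = 0
    · rw [if_pos (Or.inl hy0), if_pos hy0, Nat.zero_add, Nat.mod_self, if_pos rfl, hy0]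
    · by_cases hym : m ≤ (y : ℕ)
      · rw [if_pos (Or.inr hym), if_neg hy0, Nat.add_mod_right,
          Nat.mod_eq_of_lt (by omega), if_neg (by omega)]
        omega
      · rw [if_neg (by omega)]
  have hωL1 : ω ^ (n - m + 1) = 1 := by
    apply Equiv.ext
    intro y
    apply Fin.ext
    simp only [Equiv.Perm.coe_one, id_eq]
    exact hωLv y
  have hσinv : (σ ^ (a : ℕ))⁻¹ = σ ^ (m - (a : ℕ)) := by
    apply inv_eq_of_mul_eq_one_right
    rw [← pow_add]
    have h : (a : ℕ) + (m - (a : ℕ)) = m := by omega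
    rw [h, hσm1]
  have hωinv : (ω ^ ((b : ℕ) - m + 1))⁻¹ = ω ^ (n - (b : ℕ)) := by
    apply inv_eq_of_mul_eq_one_right
    rw [← pow_add]
    have h : ((b : ℕ) - m + 1) + (n - (b : ℕ)) = n - m + 1 := by omega
    rw [h, hωL1]
  rw [hσinv, hωinv]
  simp only [Equiv.Perm.mul_apply]
  have h1 := omega_pow n m hm hn ω hω (n - (b : ℕ)) x
  have h2 := sigma_pow n m hm σ hσ (m - (a : ℕ)) ((ω ^ (n - (b : ℕ))) x)
  have h3 := omega_pow n m hm hn ω hω ((b : ℕ) - m + 1)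
    ((σ ^ (m - (a : ℕ))) ((ω ^ (n - (b : ℕ))) x))
  have h4 := sigma_pow n m hm σ hσ (a : ℕ)
    ((ω ^ ((b : ℕ) - m + 1)) ((σ ^ (m - (a : ℕ))) ((ω ^ (n - (b : ℕ))) x)))
  by_cases hx0 : (x : ℕ) = 0
  · -- x = 0 ↦ a
    rw [if_pos (Or.inl hx0), if_pos hx0, Nat.zero_add,
      Nat.mod_eq_of_lt (by omega), if_neg (by omega)] at h1
    rw [h1, if_pos (by omega)] at h2
    rw [h2, if_pos (Or.inr (by omega)),
      if_neg (show ¬(m + (n - (b : ℕ)) - 1 = 0) by omega)] at h3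
    have he : m + (n - (b : ℕ)) - 1 - m + 1 + ((b : ℕ) - m + 1) = n - m + 1 := by omega
    rw [he, Nat.mod_self, if_pos rfl] at h3
    rw [h3, if_neg (by omega), Nat.zero_add, Nat.mod_eq_of_lt ham] at h4
    rw [h4, if_pos hx0]
  · by_cases hxm : (x : ℕ) < m
    · -- 0 < x < m
      rw [if_neg (by omega)] at h1
      by_cases hxa : (x : ℕ) = (a : ℕ)
      · -- x = a ↦ b
        rw [h1, if_neg (by omega)] at h2
        have he : (x : ℕ) + (m - (a : ℕ)) = m := by omega
        rw [he, Nat.mod_self] at h2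
        rw [h2, if_pos (Or.inl rfl), if_pos rfl, Nat.zero_add,
          Nat.mod_eq_of_lt (by omega), if_neg (by omega)] at h3
        rw [h3, if_pos (by omega)] at h4
        rw [h4, if_neg hx0, if_pos hxa]
        omega
      · -- x ∉ {0, a, b}, x < m ↦ x
        obtain ⟨v, hv2, hv0, hvm, hvx⟩ :
            ∃ v : ℕ, (((σ ^ (m - (a : ℕ))) ((ω ^ (n - (b : ℕ))) x)) : ℕ) = v ∧
              0 < v ∧ v < m ∧ (v + (a : ℕ)) % m = (x : ℕ) := by
          rw [h1, if_neg (by omega)] at h2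
          have hmod := mod_two_lt ((x : ℕ) + (m - (a : ℕ))) m (by omega) (by omega)
          refine ⟨_, h2, ?_, ?_, ?_⟩
          · rw [hmod]; split_ifs <;> omega
          · rw [hmod]; split_ifs <;> omega
          · rw [Nat.mod_add_mod]
            have he : (x : ℕ) + (m - (a : ℕ)) + (a : ℕ) = (x : ℕ) + m := by omega
            rw [he, Nat.add_mod_right, Nat.mod_eq_of_lt hxm]
        rw [hv2, if_neg (by omega)] at h3
        rw [h3, if_neg (by omega), hvx] at h4
        rw [h4, if_neg hx0, if_neg hxa, if_neg (by omega)]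
    · -- m ≤ x
      have hxm' : m ≤ (x : ℕ) := by omega
      rw [if_pos (Or.inr hxm'), if_neg hx0] at h1
      by_cases hxb : (x : ℕ) = (b : ℕ)
      · -- x = b ↦ 0
        have he : (x : ℕ) - m + 1 + (n - (b : ℕ)) = n - m + 1 := by omega
        rw [he, Nat.mod_self, if_pos rfl] at h1
        rw [h1, if_neg (by omega), Nat.zero_add, Nat.mod_eq_of_lt (by omega)] at h2
        rw [h2, if_neg (by omega)] at h3
        rw [h3, if_neg (by omega)] at h4
        have he2 : m - (a : ℕ) + (a : ℕ) = m := by omega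
        rw [he2, Nat.mod_self] at h4
        rw [h4, if_neg hx0, if_neg (by omega), if_pos hxb]
      · -- x > m region, x ≠ b ↦ x
        obtain ⟨t, ht1, ht0, htx⟩ :
            ∃ t : ℕ, (((ω ^ (n - (b : ℕ))) x) : ℕ) = m + t - 1 ∧ 1 ≤ t ∧
              (t + ((b : ℕ) - m + 1)) % (n - m + 1) = (x : ℕ) - m + 1 := by
          rw [mod_two_lt ((x : ℕ) - m + 1 + (n - (b : ℕ))) (n - m + 1)
            (by omega) (by omega)] at h1
          by_cases hu : (x : ℕ) - m + 1 + (n - (b : ℕ)) < n - m + 1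
          · rw [if_pos hu, if_neg (by omega)] at h1
            refine ⟨_, h1, by omega, ?_⟩
            have he : (x : ℕ) - m + 1 + (n - (b : ℕ)) + ((b : ℕ) - m + 1)
                = ((x : ℕ) - m + 1) + (n - m + 1) := by omega
            rw [he, Nat.add_mod_right, Nat.mod_eq_of_lt (by omega)]
          · rw [if_neg hu, if_neg (by omega)] at h1
            refine ⟨_, h1, by omega, ?_⟩
            have he : (x : ℕ) - m + 1 + (n - (b : ℕ)) - (n - m + 1) + ((b : ℕ) - m + 1)
                = (x : ℕ) - m + 1 := by omega
            rw [he, Nat.mod_eq_of_lt (by omega)]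
        rw [ht1, if_pos (by omega)] at h2
        rw [h2, if_pos (Or.inr (by omega)),
          if_neg (show ¬(m + t - 1 = 0) by omega)] at h3
        have he : m + t - 1 - m + 1 = t := by omega
        rw [he, htx, if_neg (by omega)] at h3
        have he2 : m + ((x : ℕ) - m + 1) - 1 = (x : ℕ) := by omega
        rw [he2] at h3
        rw [h3, if_pos hxm'] at h4
        rw [h4, if_neg hx0, if_neg (by omega), if_neg hxb]
end
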